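/- Let (X,ℓ₀) be a set of data for the symplectic differential problem with final instant b not focal, and let ℓ₁ be another Lagrangian subspace with associated pair (Q, S_Q). Define 𝕍_Q = {v ∈ 𝕍 : v(b) ∈ Q}. Then for every v ∈ 𝕍_Q and every w ∈ H^# = {w ∈ H¹ : w(a) ∈ P, w(b) ∈ Q}, the extended index form satisfies I^#(v,w) = 𝔔(v(b), w(b)), where 𝔔 = S_Q − S_b|_Q and S_b(v(b),w(b)) = −α_v(b)(w(b)) for v,w ∈ 𝕍. Consequently 𝕍_Q and the space K = {w ∈ H^# : w(b)=0} are I^#-orthogonal whenever 𝔔 is well defined. -/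

import Mathlib

open Set MeasureTheory

noncomputable section

abbrev V (n : ℕ) : Type := Fin n → ℝ
abbrev Dl (n : ℕ) : Type := V n →L[ℝ] ℝ

/-- The extended index form
`I^#(v,w) = ∫ₐᵇ [B⁻¹(v'−Av, w'−Aw) + C(v,w)] dt + S_Q(v(b),w(b)) − S(v(a),w(a))`. -/
def Isharp (n : ℕ) (a b : ℝ) (A : ℝ → V n →L[ℝ] V n)
    (Binv : ℝ → V n →L[ℝ] Dl n) (C : ℝ → V n →L[ℝ] Dl n)
    (S SQ : V n →L[ℝ] V n →L[ℝ] ℝ) (v w : ℝ → V n) : ℝ :=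
  (∫ t in a..b,
    ((Binv t (derivWithin v (Icc a b) t - A t (v t)))
        (derivWithin w (Icc a b) t - A t (w t)) +
      (C t (v t)) (w t))) + SQ (v b) (w b) - S (v a) (w a)

/-- For `v ∈ 𝕍_Q` (an `(X,ℓ₀)`-solution with `v(b) ∈ Q`) and any `w ∈ H^#`
(`w(a) ∈ P`, `w(b) ∈ Q`), assuming `b` is not focal, the extended index form
satisfies `I^#(v,w) = 𝔔(v(b),w(b)) = S_Q(v(b),w(b)) − S_b(v(b),w(b))` where
`S_b(v(b),w(b)) = −α_v(b)(w(b))`; consequently `I^#(v,w) = 0` whenever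
`w(b) = 0`, i.e. `𝕍_Q` is `I^#`-orthogonal to the space of variations vanishing
at `b`. -/
theorem stmt_19 (n : ℕ) (a b : ℝ) (hab : a < b)
    (A : ℝ → V n →L[ℝ] V n) (B : ℝ → Dl n →L[ℝ] V n)
    (Binv : ℝ → V n →L[ℝ] Dl n) (C : ℝ → V n →L[ℝ] Dl n)
    (hAc : ContinuousOn A (Icc a b)) (hBc : ContinuousOn B (Icc a b))
    (hBinvc : ContinuousOn Binv (Icc a b)) (hCc : ContinuousOn C (Icc a b))
    (hBinv : ∀ t ∈ Icc a b, (∀ x : V n, B t (Binv t x) = x) ∧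
      (∀ α : Dl n, Binv t (B t α) = α))
    (hBsymm : ∀ t ∈ Icc a b, ∀ α β : Dl n, β (B t α) = α (B t β))
    (hCsymm : ∀ t ∈ Icc a b, ∀ x y : V n, C t x y = C t y x)
    (P Q : Submodule ℝ (V n)) (S SQ : V n →L[ℝ] V n →L[ℝ] ℝ)
    (hSsymm : ∀ x y : V n, S x y = S y x)
    (hSQsymm : ∀ x y : V n, SQ x y = SQ y x)
    -- `b` is not a focal instant:
    (hnonfocal : ∀ (u : ℝ → V n) (αu : ℝ → Dl n),
      (∀ t ∈ Icc a b, HasDerivWithinAt u (A t (u t) + B t (αu t)) (Icc a b) t) →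
      (∀ t ∈ Icc a b,
        HasDerivWithinAt αu (C t (u t) - (αu t).comp (A t)) (Icc a b) t) →
      u a ∈ P → (∀ x ∈ P, αu a x + S (u a) x = 0) →
      u b = 0 → ∀ t ∈ Icc a b, u t = 0)
    -- `v ∈ 𝕍_Q`: an `(X,ℓ₀)`-solution with `v(b) ∈ Q`:
    (v : ℝ → V n) (αv : ℝ → Dl n)
    (hv : ∀ t ∈ Icc a b, HasDerivWithinAt v (A t (v t) + B t (αv t)) (Icc a b) t)
    (hαv : ∀ t ∈ Icc a b,
      HasDerivWithinAt αv (C t (v t) - (αv t).comp (A t)) (Icc a b) t)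
    (hva : v a ∈ P) (hinit : ∀ x ∈ P, αv a x + S (v a) x = 0)
    (hvb : v b ∈ Q)
    -- `w ∈ H^#`:
    (w dw : ℝ → V n)
    (hwc : ContinuousOn w (Icc a b)) (hdwc : ContinuousOn dw (Icc a b))
    (hw : ∀ t ∈ Icc a b, HasDerivWithinAt w (dw t) (Icc a b) t)
    (hwa : w a ∈ P) (hwb : w b ∈ Q) :
    Isharp n a b A Binv C S SQ v w = SQ (v b) (w b) + αv b (w b) ∧
    (w b = 0 → Isharp n a b A Binv C S SQ v w = 0) := by
  have uD : UniqueDiffOn ℝ (Icc a b) := uniqueDiffOn_Icc hab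
  set g : ℝ → ℝ := fun t => αv t (w t) with hgdef
  set g' : ℝ → ℝ := fun t => C t (v t) (w t) - αv t (A t (w t)) + αv t (dw t) with hg'def
  have hvc : ContinuousOn v (Icc a b) := fun t ht => (hv t ht).continuousWithinAt
  have hαvc : ContinuousOn αv (Icc a b) := fun t ht => (hαv t ht).continuousWithinAt
  have hgc : ContinuousOn g (Icc a b) := hαvc.clm_apply hwc
  have hg'c : ContinuousOn g' (Icc a b) :=
    (((hCc.clm_apply hvc).clm_apply hwc).sub (hαvc.clm_apply (hAc.clm_apply hwc))).add
      (hαvc.clm_apply hdwc)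
  have hderiv : ∀ t ∈ Icc a b, HasDerivWithinAt g (g' t) (Icc a b) t := by
    intro t ht
    have h := (hαv t ht).clm_apply (hw t ht)
    exact h.congr_deriv (by simp [hg'def])
  have hfp : ∀ t ∈ Icc a b,
      ((Binv t (derivWithin v (Icc a b) t - A t (v t)))
        (derivWithin w (Icc a b) t - A t (w t)) + (C t (v t)) (w t)) = g' t := by
    intro t ht
    have hdv : derivWithin v (Icc a b) t = A t (v t) + B t (αv t) :=
      (hv t ht).derivWithin (uD t ht)
    have hdw : derivWithin w (Icc a b) t = dw t := (hw t ht).derivWithin (uD t ht)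
    rw [hdv, hdw, add_sub_cancel_left, (hBinv t ht).2]
    simp [hg'def, map_sub]
    ring
  have hint : (∫ t in a..b,
      ((Binv t (derivWithin v (Icc a b) t - A t (v t)))
        (derivWithin w (Icc a b) t - A t (w t)) + (C t (v t)) (w t))) = g b - g a := by
    rw [intervalIntegral.integral_congr (g := g')
      (fun t ht => hfp t (by rwa [uIcc_of_le hab.le] at ht))]
    exact intervalIntegral.integral_eq_sub_of_hasDeriv_right_of_le hab.le hgc
      (fun t ht => ((hderiv t (Ioo_subset_Icc_self ht)).hasDerivAt
        (Icc_mem_nhds ht.1 ht.2)).hasDerivWithinAt)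
      ((hg'c.mono (by rw [uIcc_of_le hab.le])).intervalIntegrable)
  have hga : g a = - S (v a) (w a) := by
    have := hinit (w a) hwa; simp [hgdef]; linarith
  have key : Isharp n a b A Binv C S SQ v w = SQ (v b) (w b) + αv b (w b) := by
    unfold Isharp
    rw [hint, hga]
    simp [hgdef]; ring
  exact ⟨key, fun h => by simp [key, h]⟩
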